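/- Let B be an open ball in ℝ^d with d ≥ 1, and let f ∈ VMO(B) ∩ L^∞(B), i.e. f is essentially bounded on B and there exists f̃ ∈ VMO with f̃ = f on B. Then there exists f̂ ∈ VMO ∩ L^∞(ℝ^d) such that f̂ = f on B. -/

import Mathlib

open MeasureTheory Metric Set Filter
open scoped ENNReal Topology

noncomputable section

abbrev Rd (d : ℕ) := EuclideanSpace ℝ (Fin d)

variable {d : ℕ}

/-- Smooth compactly supported test function with support contained in `U`. -/
def IsTestOn (U : Set (Rd d)) (φ : Rd d → ℝ) : Prop :=
  ContDiff ℝ (⊤ : ℕ∞) φ ∧ HasCompactSupport φ ∧ tsupport φ ⊆ U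

/-- The `i`-th partial derivative. -/
def pd (i : Fin d) (φ : Rd d → ℝ) (x : Rd d) : ℝ :=
  fderiv ℝ φ x (EuclideanSpace.single i 1)

/-- `g` is the `i`-th weak partial derivative of `u` on `U`. -/
def HasWeakDeriv (U : Set (Rd d)) (u : Rd d → ℝ) (i : Fin d) (g : Rd d → ℝ) : Prop :=
  ∀ φ : Rd d → ℝ, IsTestOn U φ →
    ∫ x in U, u x * pd i φ x = -∫ x in U, g x * φ x

/-- `u ∈ L^r_loc(U)`. -/
def MemLpLoc (U : Set (Rd d)) (r : ℝ) (u : Rd d → ℝ) : Prop :=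
  ∀ K : Set (Rd d), IsCompact K → K ⊆ U →
    MemLp u (ENNReal.ofReal r) (volume.restrict K)

/-- Pointwise Euclidean norm of a vector field. -/
def euclNorm (F : Rd d → Fin d → ℝ) (x : Rd d) : ℝ :=
  Real.sqrt (∑ i, F x i ^ 2)

def MemLpLocVec (U : Set (Rd d)) (r : ℝ) (F : Rd d → Fin d → ℝ) : Prop :=
  MemLpLoc U r (euclNorm F)

/-- `u ∈ H^{1,r}_loc(U)`. -/
def MemH1Loc (U : Set (Rd d)) (r : ℝ) (u : Rd d → ℝ) : Prop :=
  MemLpLoc U r u ∧ ∃ g : Fin d → Rd d → ℝ,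
    (∀ i, HasWeakDeriv U u i (g i)) ∧ ∀ i, MemLpLoc U r (g i)

/-- `u ∈ H^{1,r}(V)`. -/
def MemH1 (V : Set (Rd d)) (r : ℝ) (u : Rd d → ℝ) : Prop :=
  MemLp u (ENNReal.ofReal r) (volume.restrict V) ∧
  ∃ g : Fin d → Rd d → ℝ, (∀ i, HasWeakDeriv V u i (g i)) ∧
    ∀ i, MemLp (g i) (ENNReal.ofReal r) (volume.restrict V)

/-- `u ∈ H^{1,r}_0(V)`: approximable by test functions in the `H^{1,r}`-norm. -/
def MemH10 (V : Set (Rd d)) (r : ℝ) (u : Rd d → ℝ) : Prop :=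
  ∃ g : Fin d → Rd d → ℝ, (∀ i, HasWeakDeriv V u i (g i)) ∧
    ∃ un : ℕ → Rd d → ℝ, (∀ n, IsTestOn V (un n)) ∧
      Tendsto (fun n => ∫ x in V, |un n x - u x| ^ r) atTop (𝓝 0) ∧
      ∀ i, Tendsto (fun n => ∫ x in V, |pd i (un n) x - (g i) x| ^ r) atTop (𝓝 0)

/-- `u ∈ H^{2,2}(V)`. -/
def MemH22 (V : Set (Rd d)) (u : Rd d → ℝ) : Prop :=
  MemLp u 2 (volume.restrict V) ∧
  ∃ g : Fin d → Rd d → ℝ, (∀ i, HasWeakDeriv V u i (g i)) ∧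
    (∀ i, MemLp (g i) 2 (volume.restrict V)) ∧
    ∃ g2 : Fin d → Fin d → Rd d → ℝ,
      (∀ i j, HasWeakDeriv V (g i) j (g2 i j)) ∧
      ∀ i j, MemLp (g2 i j) 2 (volume.restrict V)

/-- Weak divergence of a matrix-valued map. -/
def HasWeakDivMatrix (U : Set (Rd d)) (A : Rd d → Matrix (Fin d) (Fin d) ℝ)
    (E : Rd d → Fin d → ℝ) : Prop :=
  ∀ Φ : Fin d → Rd d → ℝ, (∀ j, IsTestOn U (Φ j)) →
    ∫ x in U, ∑ i, ∑ j, A x i j * pd i (Φ j) x = -∫ x in U, ∑ j, E x j * Φ j x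

/-- Weak divergence of a vector field. -/
def HasWeakDivVec (U : Set (Rd d)) (F : Rd d → Fin d → ℝ) (f : Rd d → ℝ) : Prop :=
  ∀ φ : Rd d → ℝ, IsTestOn U φ →
    ∫ x in U, ∑ i, F x i * pd i φ x = -∫ x in U, f x * φ x

/-- Locally uniformly strictly elliptic and bounded on `U`. -/
def LocUnifEllipticBounded (U : Set (Rd d)) (A : Rd d → Matrix (Fin d) (Fin d) ℝ) : Prop :=
  ∀ (z : Rd d) (rV : ℝ), 0 < rV → closure (ball z rV) ⊆ U →
    ∃ lam M : ℝ, 0 < lam ∧ 0 < M ∧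
      ∀ᵐ x ∂(volume : Measure (Rd d)), x ∈ ball z rV →
        (∀ ξ : Rd d, lam * ‖ξ‖ ^ 2 ≤ ∑ i, ∑ j, A x i j * ξ j * ξ i) ∧
        ∀ i j, |A x i j| ≤ M

/-- `ω` is a VMO-modulus for `g`. -/
def IsVMOWith (g : Rd d → ℝ) (ω : ℝ → ℝ) : Prop :=
  ContinuousOn ω (Ici 0) ∧ ω 0 = 0 ∧ (∀ t, 0 < t → 0 < ω t) ∧
  ∀ R > (0:ℝ), ∀ z : Rd d, ∀ r : ℝ, 0 < r → r < R →
    (∫ x in ball z r, ∫ y in ball z r, |g x - g y|) ≤ r ^ (2 * d) * ω R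

def IsVMO (g : Rd d → ℝ) : Prop :=
  LocallyIntegrable g volume ∧ ∃ ω, IsVMOWith g ω

def MemVMOBall (B : Set (Rd d)) (f : Rd d → ℝ) : Prop :=
  ∃ g : Rd d → ℝ, IsVMO g ∧ EqOn g f B

def MemVMOLoc (U : Set (Rd d)) (f : Rd d → ℝ) : Prop :=
  ∀ (z : Rd d) (r : ℝ), 0 < r → closure (ball z r) ⊆ U → MemVMOBall (ball z r) f

/-- Locally Hölder continuous with exponent `β` on `U`. -/
def LocHolderOn (U : Set (Rd d)) (β : ℝ) (u : Rd d → ℝ) : Prop :=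
  ∀ K : Set (Rd d), IsCompact K → K ⊆ U →
    ∃ C : ℝ, 0 ≤ C ∧ ∀ x ∈ K, ∀ y ∈ K, |u x - u y| ≤ C * ‖x - y‖ ^ β

/-- The measure `μ = ρ dx`. -/
def rhoMeasure (ρ : Rd d → ℝ) : Measure (Rd d) :=
  volume.withDensity fun x => ENNReal.ofReal (ρ x)

/-- The vector field `𝐁 = H - ρ⁻¹ Aᵀ ∇ρ`. -/
def Bvec (A : Rd d → Matrix (Fin d) (Fin d) ℝ) (H : Rd d → Fin d → ℝ)
    (ρ : Rd d → ℝ) (gρ : Fin d → Rd d → ℝ) (x : Rd d) (i : Fin d) : ℝ :=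
  H x i - (∑ j, A x j i * gρ j x) / ρ x

/-- The bilinear form `E(f,g) = ∫_{B₀} ⟨A∇f,∇g⟩ dμ − ∫_{B₀} ⟨Bv,∇f⟩ g dμ`. -/
def dirForm (A : Rd d → Matrix (Fin d) (Fin d) ℝ) (Bv : Rd d → Fin d → ℝ)
    (μ : Measure (Rd d)) (B₀ : Set (Rd d)) (f g : Rd d → ℝ) : ℝ :=
  (∫ x in B₀, ∑ i, (∑ j, A x i j * pd j f x) * pd i g x ∂μ)
    - ∫ x in B₀, (∑ i, Bv x i * pd i f x) * g x ∂μ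

/-- Locally essentially bounded on `U`. -/
def LocBddAe (U : Set (Rd d)) (f : Rd d → ℝ) : Prop :=
  ∀ K : Set (Rd d), IsCompact K → K ⊆ U →
    ∃ M : ℝ, ∀ᵐ x ∂(volume.restrict K), |f x| ≤ M


/-- Lemma `bdextenlem`: a function in `VMO(B) ∩ L^∞(B)` on an open ball `B`
extends to a function in `VMO ∩ L^∞(ℝ^d)`. -/
theorem vmo_bounded_extension
    {d : ℕ} (hd : 1 ≤ d) (z : Rd d) (r : ℝ) (hr : 0 < r)
    (f : Rd d → ℝ)
    (hfv : MemVMOBall (ball z r) f)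
    (Cf : ℝ) (hfb : ∀ᵐ x ∂(volume.restrict (ball z r)), |f x| ≤ Cf) :
    ∃ fhat : Rd d → ℝ, IsVMO fhat ∧
      (∃ C : ℝ, ∀ᵐ x ∂(volume : Measure (Rd d)), |fhat x| ≤ C) ∧
      EqOn fhat f (ball z r) := by

  classical
  obtain ⟨g, ⟨hgint, ω, hω1, hω2, hω3, hω4⟩, hgf⟩ := hfv
  set M : ℝ := max Cf 0 with hMdef
  have hM0 : (0:ℝ) ≤ M := le_max_right _ _
  set T : Rd d → ℝ := fun x => max (-M) (min M (g x)) with hTdef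
  have hTb : ∀ x, |T x| ≤ M := by
    intro x
    rw [abs_le]
    refine ⟨le_max_left _ _, max_le (neg_le_self hM0) (min_le_left _ _)⟩
  have hTlip : ∀ x y, |T x - T y| ≤ |g x - g y| := by
    intro x y
    calc |T x - T y| ≤ max |(-M) - (-M)| |min M (g x) - min M (g y)| :=
          abs_max_sub_max_le_max _ _ _ _
      _ = |min M (g x) - min M (g y)| := by
          rw [sub_self, abs_zero, max_eq_right (abs_nonneg _)]
      _ ≤ max |M - M| |g x - g y| := abs_min_sub_min_le_max _ _ _ _
      _ = |g x - g y| := by rw [sub_self, abs_zero, max_eq_right (abs_nonneg _)]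
  have hTm : AEStronglyMeasurable T volume := by
    have hc : Continuous fun s : ℝ => max (-M) (min M s) :=
      continuous_const.max (continuous_const.min continuous_id)
    exact hc.comp_aestronglyMeasurable hgint.aestronglyMeasurable
  set fhat : Rd d → ℝ := fun x => if x ∈ ball z r then f x else T x with hfhatdef
  have hae : ∀ᵐ x ∂(volume : Measure (Rd d)), x ∈ ball z r → |f x| ≤ Cf :=
    (ae_restrict_iff' measurableSet_ball).mp hfb
  have hfT : fhat =ᵐ[volume] T := by
    filter_upwards [hae] with x hx
    by_cases hxb : x ∈ ball z r
    · have hfg : g x = f x := hgf hxb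
      have hb : |g x| ≤ M := by rw [hfg]; exact (hx hxb).trans (le_max_left _ _)
      have hTx : T x = g x := by
        rw [hTdef]
        simp only
        rw [min_eq_right (abs_le.mp hb).2, max_eq_right (abs_le.mp hb).1]
      simp only [hfhatdef, if_pos hxb, hTx, hfg]
    · simp only [hfhatdef, if_neg hxb]
  -- key double-integral inequality on arbitrary balls
  have key : ∀ (z' : Rd d) (r' : ℝ),
      (∫ x in ball z' r', ∫ y in ball z' r', |fhat x - fhat y|)
        ≤ ∫ x in ball z' r', ∫ y in ball z' r', |g x - g y| := by
    intro z' r'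
    set ν : Measure (Rd d) := volume.restrict (ball z' r') with hνdef
    have hfin : IsFiniteMeasure ν := by
      constructor
      rw [hνdef, Measure.restrict_apply_univ]
      exact measure_ball_lt_top
    have hgν : Integrable g ν :=
      (hgint.integrableOn_isCompact (isCompact_closedBall z' r')).mono_set
        ball_subset_closedBall
    have hin : ∀ x, (∫ y, |T x - T y| ∂ν) ≤ ∫ y, |g x - g y| ∂ν := by
      intro x
      refine integral_mono_of_nonneg (Eventually.of_forall fun y => abs_nonneg _)
        ((integrable_const (g x)).sub hgν).abs
        (Eventually.of_forall fun y => hTlip x y)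
    have hgm : AEStronglyMeasurable g ν := hgν.aestronglyMeasurable
    have hFm : AEStronglyMeasurable (fun p : Rd d × Rd d => |g p.1 - g p.2|) (ν.prod ν) := by
      have h1 : AEStronglyMeasurable (fun p : Rd d × Rd d => g p.1 - g p.2) (ν.prod ν) :=
        hgm.comp_fst.sub hgm.comp_snd
      exact continuous_abs.comp_aestronglyMeasurable h1
    have hFprod : Integrable (fun p : Rd d × Rd d => |g p.1 - g p.2|) (ν.prod ν) := by
      refine Integrable.mono'
        (g := fun p : Rd d × Rd d => |g p.1| * 1 + 1 * |g p.2|) ?_ hFm ?_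
      · exact (hgν.abs.mul_prod (integrable_const 1)).add
          ((integrable_const 1).mul_prod hgν.abs)
      · refine Eventually.of_forall fun p => ?_
        simp only [Real.norm_eq_abs, abs_abs, mul_one, one_mul]
        exact abs_sub _ _
    have hGint : Integrable (fun x => ∫ y, |g x - g y| ∂ν) ν := by
      have := hFprod.integral_prod_left
      simpa using this
    have heq : (∫ x, ∫ y, |fhat x - fhat y| ∂ν ∂ν) = ∫ x, ∫ y, |T x - T y| ∂ν ∂ν := by
      refine integral_congr_ae ?_
      filter_upwards [ae_restrict_of_ae hfT] with x hx
      refine integral_congr_ae ?_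
      filter_upwards [ae_restrict_of_ae hfT] with y hy
      rw [hx, hy]
    calc (∫ x, ∫ y, |fhat x - fhat y| ∂ν ∂ν) = ∫ x, ∫ y, |T x - T y| ∂ν ∂ν := heq
      _ ≤ ∫ x, ∫ y, |g x - g y| ∂ν ∂ν := by
          refine integral_mono_of_nonneg
            (Eventually.of_forall fun x => integral_nonneg fun y => abs_nonneg _)
            hGint (Eventually.of_forall hin)
  have hfm : AEStronglyMeasurable fhat volume := hTm.congr hfT.symm
  have hmem : MemLp fhat ⊤ volume := by
    refine memLp_top_of_bound hfm M ?_
    filter_upwards [hfT] with x hx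
    rw [Real.norm_eq_abs, hx]
    exact hTb x
  refine ⟨fhat, ⟨hmem.locallyIntegrable le_top, ω, hω1, hω2, hω3, ?_⟩, ⟨M, ?_⟩, ?_⟩
  · intro R hR z' r' hr' hrR
    exact (key z' r').trans (hω4 R hR z' r' hr' hrR)
  · filter_upwards [hfT] with x hx
    rw [hx]
    exact hTb x
  · intro x hx
    simp only [hfhatdef, if_pos hx]
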